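/- arXiv:2111.01027 — 2 statements merged into one kernel-verified Lean document; each statement's English description precedes it below -/
import Mathlib

section
/- (Conservation of the Hamiltonian for smooth solutions) Let n ∈ {2, 3}, α > 0, T > 0. Let u : 𝕋ⁿ × [0, T] → ℝⁿ and p : 𝕋ⁿ × [0, T] → ℝ be smooth with div u(·, t) = 0 for all t, satisfying pointwise the Euler-α equations ∂_t v + (u·∇) v + ∑_j v^j ∇u^j + ∇p = 0, where v := u − α² Δu. Then the Hamiltonian H_α(t) = ∫_{𝕋ⁿ} (|u(x,t)|² + α² |∇u(x,t)|²) dx is constant on [0, T]. -/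
/-- Partial derivative in the `i`-th coordinate direction of a function on `ℝⁿ`. -/
noncomputable def pd {n : ℕ} (f : (Fin n → ℝ) → ℝ) (i : Fin n) (x : Fin n → ℝ) : ℝ :=
  fderiv ℝ f x (Pi.single i 1)

open MeasureTheory Set

section aux
variable {E F : Type*} [NormedAddCommGroup E] [NormedSpace ℝ E]
  [NormedAddCommGroup F] [NormedSpace ℝ F]

lemma contDiff_fderiv_apply {f : E → F} (hf : ContDiff ℝ (⊤ : ℕ∞) f) (w : E) :
    ContDiff ℝ (⊤ : ℕ∞) (fun x => fderiv ℝ f x w) :=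
  (hf.fderiv_right (by simp)).clm_apply contDiff_const

lemma fderiv_of_translate {f : E → F} (hf : Differentiable ℝ f) (c : E)
    (hper : ∀ x, f (x + c) = f x) (x : E) :
    fderiv ℝ f (x + c) = fderiv ℝ f x := by
  have h1 : HasFDerivAt (fun y => f (y + c)) (fderiv ℝ f (x + c)) x := by
    have := (hf (x + c)).hasFDerivAt
    have h2 : HasFDerivAt (fun y : E => y + c) (ContinuousLinearMap.id ℝ E) x :=
      (hasFDerivAt_id x).add_const c
    simpa [Function.comp_def] using this.comp x h2
  have h3 : (fun y => f (y + c)) = f := funext hper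
  rw [h3] at h1
  exact (hf x).hasFDerivAt.unique h1 ▸ rfl

/-- For a smooth function, iterated directional derivatives commute. -/
lemma fderiv_symm {G : E → ℝ} (hG : ContDiff ℝ (⊤ : ℕ∞) G) (w w' : E) (q : E) :
    fderiv ℝ (fun z => fderiv ℝ G z w) q w' = fderiv ℝ (fun z => fderiv ℝ G z w') q w := by
  have hd : ContDiff ℝ (⊤ : ℕ∞) (fderiv ℝ G) := hG.fderiv_right (by simp)
  have hG1 : Differentiable ℝ G := hG.differentiable (by simp)
  have hdd : DifferentiableAt ℝ (fderiv ℝ G) q := (hd.differentiable (by simp)) q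
  have hsym := second_derivative_symmetric (f := G) (f' := fderiv ℝ G)
    (f'' := fderiv ℝ (fderiv ℝ G) q) (fun y => (hG1 y).hasFDerivAt) hdd.hasFDerivAt w w'
  have e1 : ∀ u : E, fderiv ℝ (fun z => fderiv ℝ G z u) q
      = (fderiv ℝ (fderiv ℝ G) q).flip u := by
    intro u
    have := fderiv_clm_apply (c := fderiv ℝ G) (u := fun _ => u) hdd (differentiableAt_const u)
    simp only [fderiv_fun_const, Pi.zero_apply] at this
    rw [this]; ext z; simp
  rw [e1 w, e1 w']
  simpa using hsym.symm

variable (w : E) (q : E)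

lemma fdapp_add {f g : E → ℝ} (hf : DifferentiableAt ℝ f q) (hg : DifferentiableAt ℝ g q) :
    fderiv ℝ (fun y => f y + g y) q w = fderiv ℝ f q w + fderiv ℝ g q w := by
  rw [fderiv_fun_add hf hg]; rfl

lemma fdapp_sub {f g : E → ℝ} (hf : DifferentiableAt ℝ f q) (hg : DifferentiableAt ℝ g q) :
    fderiv ℝ (fun y => f y - g y) q w = fderiv ℝ f q w - fderiv ℝ g q w := by
  rw [fderiv_fun_sub hf hg]; rfl

lemma fdapp_sum {ι : Type*} (s : Finset ι) {f : ι → E → ℝ}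
    (h : ∀ i ∈ s, DifferentiableAt ℝ (f i) q) :
    fderiv ℝ (fun y => ∑ i ∈ s, f i y) q w = ∑ i ∈ s, fderiv ℝ (f i) q w := by
  rw [fderiv_fun_sum h]; simp

lemma fdapp_const_mul {f : E → ℝ} (hf : DifferentiableAt ℝ f q) (c : ℝ) :
    fderiv ℝ (fun y => c * f y) q w = c * fderiv ℝ f q w := by
  rw [fderiv_const_mul hf c]; simp

lemma fdapp_mul {f g : E → ℝ} (hf : DifferentiableAt ℝ f q) (hg : DifferentiableAt ℝ g q) :
    fderiv ℝ (fun y => f y * g y) q w = f q * fderiv ℝ g q w + g q * fderiv ℝ f q w := by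
  rw [fderiv_fun_mul hf hg]; simp [mul_comm]

lemma fdapp_sq {f : E → ℝ} (hf : DifferentiableAt ℝ f q) :
    fderiv ℝ (fun y => f y ^ 2) q w = 2 * f q * fderiv ℝ f q w := by
  have h : (fun y => f y ^ 2) = fun y => f y * f y := funext fun y => sq (f y)
  rw [h, fdapp_mul w q hf hf]; ring
end aux

section spatial
variable {n : ℕ}

/-- spatial periodicity -/
def Per (f : (Fin n → ℝ) → ℝ) : Prop :=
  ∀ (x : Fin n → ℝ) (z : Fin n → ℤ), f (x + fun i => 2 * Real.pi * (z i : ℝ)) = f x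

lemma Per.pd {f : (Fin n → ℝ) → ℝ} (hf : Differentiable ℝ f) (hper : Per f) (k : Fin n) :
    Per (pd f k) := fun x z => by
  unfold _root_.pd
  rw [fderiv_of_translate hf _ (fun y => hper y z) x]

lemma Per.mul {f g : (Fin n → ℝ) → ℝ} (hf : Per f) (hg : Per g) : Per (fun x => f x * g x) :=
  fun x z => by simp only [hf x z, hg x z]

lemma pd_mul {f g : (Fin n → ℝ) → ℝ} {x : Fin n → ℝ} (hf : DifferentiableAt ℝ f x)
    (hg : DifferentiableAt ℝ g x) (k : Fin n) :
    pd (fun y => f y * g y) k x = f x * pd g k x + g x * pd f k x :=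
  fdapp_mul _ _ hf hg

lemma contDiff_pd {f : (Fin n → ℝ) → ℝ} (hf : ContDiff ℝ (⊤ : ℕ∞) f) (k : Fin n) :
    ContDiff ℝ (⊤ : ℕ∞) (pd f k) := contDiff_fderiv_apply hf _
end spatial

section product
variable {n : ℕ}

/-- Partial derivative in the `i`-th spatial direction, for functions on time × space. -/
noncomputable def Dp (G : ℝ × (Fin n → ℝ) → ℝ) (i : Fin n) (q : ℝ × (Fin n → ℝ)) : ℝ :=
  fderiv ℝ G q (0, Pi.single i 1)

/-- Time derivative, for functions on time × space. -/
noncomputable def Dt (G : ℝ × (Fin n → ℝ) → ℝ) (q : ℝ × (Fin n → ℝ)) : ℝ :=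
  fderiv ℝ G q (1, 0)

/-- spatial periodicity for functions on time × space -/
def XPer (G : ℝ × (Fin n → ℝ) → ℝ) : Prop :=
  ∀ (t : ℝ) (x : Fin n → ℝ) (z : Fin n → ℤ), G (t, x + fun i => 2 * Real.pi * (z i : ℝ)) = G (t, x)

lemma XPer.fdapp {G : ℝ × (Fin n → ℝ) → ℝ} (hG : Differentiable ℝ G) (hper : XPer G)
    (w : ℝ × (Fin n → ℝ)) : XPer (fun q => fderiv ℝ G q w) := by
  intro t x z
  have h := fderiv_of_translate hG ((0 : ℝ), fun i => 2 * Real.pi * (z i : ℝ))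
    (fun q => by
      have : q + ((0 : ℝ), fun i => 2 * Real.pi * (z i : ℝ))
          = (q.1, q.2 + fun i => 2 * Real.pi * (z i : ℝ)) := by
        simp [Prod.ext_iff]
      rw [this, hper q.1 q.2 z]) (t, x)
  have e : ((t, x) : ℝ × (Fin n → ℝ)) + ((0 : ℝ), fun i => 2 * Real.pi * (z i : ℝ))
      = (t, x + fun i => 2 * Real.pi * (z i : ℝ)) := by simp [Prod.ext_iff]
  rw [e] at h
  simp only []
  rw [h]

lemma XPer.Dp {G : ℝ × (Fin n → ℝ) → ℝ} (hG : Differentiable ℝ G) (hper : XPer G) (i : Fin n) :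
    XPer (Dp G i) := hper.fdapp hG _

lemma XPer.Dt {G : ℝ × (Fin n → ℝ) → ℝ} (hG : Differentiable ℝ G) (hper : XPer G) :
    XPer (Dt G) := hper.fdapp hG _

lemma XPer.mul {G H : ℝ × (Fin n → ℝ) → ℝ} (hG : XPer G) (hH : XPer H) :
    XPer (fun q => G q * H q) := fun t x z => by simp only [hG t x z, hH t x z]

lemma XPer.slice {G : ℝ × (Fin n → ℝ) → ℝ} (hG : XPer G) (t : ℝ) :
    Per (fun x => G (t, x)) := fun x z => hG t x z

lemma ContDiff.slice {G : ℝ × (Fin n → ℝ) → ℝ} (hG : ContDiff ℝ (⊤ : ℕ∞) G) (t : ℝ) :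
    ContDiff ℝ (⊤ : ℕ∞) (fun x => G (t, x)) :=
  hG.comp (contDiff_const.prodMk contDiff_id)

lemma slice_spatial {G : ℝ × (Fin n → ℝ) → ℝ} {t : ℝ} {x : Fin n → ℝ}
    (hG : DifferentiableAt ℝ G (t, x)) :
    HasFDerivAt (fun y => G (t, y))
      ((fderiv ℝ G (t, x)).comp (ContinuousLinearMap.inr ℝ ℝ (Fin n → ℝ))) x := by
  have h2 : HasFDerivAt (fun y : Fin n → ℝ => ((t, y) : ℝ × (Fin n → ℝ)))
      (ContinuousLinearMap.inr ℝ ℝ (Fin n → ℝ)) x :=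
    (hasFDerivAt_const t x).prodMk (hasFDerivAt_id x)
  exact hG.hasFDerivAt.comp x h2

lemma pd_slice {G : ℝ × (Fin n → ℝ) → ℝ} (hG : Differentiable ℝ G) (t : ℝ) (i : Fin n) :
    pd (fun y => G (t, y)) i = fun x => Dp G i (t, x) := by
  funext x
  rw [pd, (slice_spatial (hG (t, x))).fderiv]; rfl

lemma slice_time {G : ℝ × (Fin n → ℝ) → ℝ} {t : ℝ} {x : Fin n → ℝ}
    (hG : DifferentiableAt ℝ G (t, x)) :
    HasDerivAt (fun s => G (s, x)) (Dt G (t, x)) t := by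
  have h2 : HasDerivAt (fun s : ℝ => ((s, x) : ℝ × (Fin n → ℝ))) (1, 0) t :=
    (hasDerivAt_id t).prodMk (hasDerivAt_const t x)
  exact hG.hasFDerivAt.comp_hasDerivAt t h2

lemma deriv_slice {G : ℝ × (Fin n → ℝ) → ℝ} (hG : Differentiable ℝ G) (t : ℝ) (x : Fin n → ℝ) :
    deriv (fun s => G (s, x)) t = Dt G (t, x) := (slice_time (hG (t, x))).deriv

/-- ∂/∂xᵢ and ∂/∂t commute for smooth functions. -/
lemma Dp_Dt_comm {G : ℝ × (Fin n → ℝ) → ℝ} (hG : ContDiff ℝ (⊤ : ℕ∞) G) (i : Fin n) :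
    Dp (Dt G) i = Dt (Dp G i) :=
  funext fun q => fderiv_symm hG _ _ q

/-- Differentiation under the integral sign over the period box. -/
lemma hasDerivAt_integral_box (G : ℝ × (Fin n → ℝ) → ℝ) (hG : ContDiff ℝ (⊤ : ℕ∞) G) (t : ℝ) :
    HasDerivAt (fun s => ∫ x in Icc (0 : Fin n → ℝ) (fun _ => 2 * Real.pi), G (s, x))
      (∫ x in Icc (0 : Fin n → ℝ) (fun _ => 2 * Real.pi), Dt G (t, x)) t := by
  set B : Set (Fin n → ℝ) := Icc (0 : Fin n → ℝ) (fun _ => 2 * Real.pi) with hB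
  have hGc : Continuous G := hG.continuous
  have hGd : Differentiable ℝ G := hG.differentiable (by simp)
  have hF' : Continuous (fun q : ℝ × (Fin n → ℝ) => fderiv ℝ G q (1, 0)) :=
    (contDiff_fderiv_apply hG (1, 0)).continuous
  have hK : IsCompact ((Icc (t - 1) (t + 1)) ×ˢ B) := isCompact_Icc.prod isCompact_Icc
  obtain ⟨C, hC⟩ := hK.exists_bound_of_continuousOn (hF'.continuousOn)
  have key := hasDerivAt_integral_of_dominated_loc_of_deriv_le (F := fun s x => G (s, x))
    (F' := fun s x => fderiv ℝ G (s, x) (1, 0)) (μ := volume.restrict B)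
    (bound := fun _ => C) (x₀ := t) (s := Metric.ball t 1) (Metric.ball_mem_nhds t one_pos)
    (Filter.Eventually.of_forall fun s =>
      ((hGc.comp (Continuous.prodMk_right s)).aestronglyMeasurable))
    (((hGc.comp (Continuous.prodMk_right t)).continuousOn.integrableOn_compact isCompact_Icc))
    ((hF'.comp (Continuous.prodMk_right t)).aestronglyMeasurable)
    ?_ ?_ ?_
  · exact key.2
  · rw [ae_restrict_iff' measurableSet_Icc]
    refine Filter.Eventually.of_forall fun x hx => fun s hs => ?_
    refine hC (s, x) ⟨?_, hx⟩
    have := Metric.mem_ball.mp hs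
    rw [Real.dist_eq] at this
    constructor <;> linarith [abs_le.mp this.le |>.1, abs_le.mp this.le |>.2]
  · exact (integrableOn_const isCompact_Icc.measure_lt_top.ne)
  · exact Filter.Eventually.of_forall fun x => fun s _ => slice_time (hGd (s, x))
end product

section ibp
open MeasureTheory Set
variable {m : ℕ}

lemma insertNth_shift (k : Fin (m + 1)) (y : Fin m → ℝ) :
    (k.insertNth (2 * Real.pi) y : Fin (m+1) → ℝ)
      = k.insertNth 0 y + fun i => 2 * Real.pi * (((Pi.single k 1 : Fin (m+1) → ℤ) i : ℤ) : ℝ) := by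
  funext j
  rcases eq_or_ne j k with rfl | hj
  · simp [Fin.insertNth_apply_same]
  · obtain ⟨i, rfl⟩ := Fin.exists_succAbove_eq (by exact hj)
    simp [Fin.insertNth_apply_succAbove, Pi.single_eq_of_ne (Fin.succAbove_ne k i)]

/-- Integral of a partial derivative of a smooth periodic function over the period box is 0. -/
lemma integral_pd_zero (g : (Fin (m + 1) → ℝ) → ℝ) (hg : ContDiff ℝ (⊤ : ℕ∞) g)
    (hper : Per g) (k : Fin (m + 1)) :
    ∫ x in Icc (0 : Fin (m+1) → ℝ) (fun _ => 2 * Real.pi), pd g k x = 0 := by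
  have hle : (0 : Fin (m+1) → ℝ) ≤ fun _ => 2 * Real.pi := fun i => by positivity
  have hdiv := integral_divergence_of_hasFDerivAt_off_countable'
    (0 : Fin (m+1) → ℝ) (fun _ => 2 * Real.pi) hle
    (fun i => if i = k then g else 0)
    (fun i => if i = k then fderiv ℝ g else 0) ∅ countable_empty
    (fun i => by
      rcases eq_or_ne i k with rfl | hik
      · simpa using (hg.continuous).continuousOn
      · simp [hik]; exact continuousOn_const)
    (fun x _ i => by
      rcases eq_or_ne i k with rfl | hik
      · simpa using (hg.differentiable (by simp) x).hasFDerivAt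
      · simp [hik]; exact hasFDerivAt_const 0 x)
    (by
      have : Continuous fun x : Fin (m+1) → ℝ =>
          ∑ i, (if i = k then fderiv ℝ g else 0) x (Pi.single i 1) := by
        apply continuous_finset_sum; intro i _
        rcases eq_or_ne i k with rfl | hik
        · simpa using (contDiff_fderiv_apply hg (Pi.single i 1)).continuous
        · simp [hik]; exact continuous_const
      exact this.continuousOn.integrableOn_compact isCompact_Icc)
  have hsum : ∀ x : Fin (m+1) → ℝ,
      (∑ i, (if i = k then fderiv ℝ g else 0) x (Pi.single i 1)) = pd g k x := by
    intro x
    rw [Finset.sum_eq_single k]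
    · simp [pd]
    · intro i _ hik; simp [hik]
    · simp
  rw [setIntegral_congr_fun measurableSet_Icc (fun x _ => (hsum x))] at hdiv
  rw [hdiv]
  apply Finset.sum_eq_zero
  intro i _
  rcases eq_or_ne i k with rfl | hik
  · have : ∀ y : Fin m → ℝ,
        g (i.insertNth ((fun _ => 2 * Real.pi : Fin (m+1) → ℝ) i) y)
          = g (i.insertNth ((0 : Fin (m+1) → ℝ) i) y) := by
      intro y
      have h0 : ((0 : Fin (m+1) → ℝ) i) = (0:ℝ) := rfl
      rw [h0]
      have := hper (i.insertNth 0 y) (Pi.single i 1)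
      rw [← this, ← insertNth_shift]
    simp only [if_pos rfl, sub_eq_zero]
    apply setIntegral_congr_fun measurableSet_Icc
    intro y _
    simpa using this y
  · simp [hik]

lemma intB_integrable {f : (Fin (m+1) → ℝ) → ℝ} (hf : Continuous f) :
    IntegrableOn f (Icc (0 : Fin (m+1) → ℝ) (fun _ => 2 * Real.pi)) :=
  hf.continuousOn.integrableOn_compact isCompact_Icc

/-- ∫ u·∇φ = 0 for a divergence-free periodic field. -/
lemma integral_divfree (W : Fin (m+1) → (Fin (m+1) → ℝ) → ℝ)
    (hW : ∀ k, ContDiff ℝ (⊤ : ℕ∞) (W k)) (hWper : ∀ k, Per (W k))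
    (hWdiv : ∀ x, (∑ k, pd (W k) k x) = 0)
    (Φ : (Fin (m+1) → ℝ) → ℝ) (hΦ : ContDiff ℝ (⊤ : ℕ∞) Φ) (hΦper : Per Φ) :
    ∫ x in Icc (0 : Fin (m+1) → ℝ) (fun _ => 2 * Real.pi), (∑ k, W k x * pd Φ k x) = 0 := by
  have key : ∀ x, (∑ k, W k x * pd Φ k x)
      = (∑ k, pd (fun y => W k y * Φ y) k x) - Φ x * ∑ k, pd (W k) k x := by
    intro x
    rw [Finset.mul_sum, ← Finset.sum_sub_distrib]
    apply Finset.sum_congr rfl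
    intro k _
    rw [pd_mul ((hW k).differentiable (by simp) x) (hΦ.differentiable (by simp) x)]
    ring
  rw [setIntegral_congr_fun measurableSet_Icc (fun x _ => key x)]
  have h1 : ∀ k : Fin (m+1), ∫ x in Icc (0 : Fin (m+1) → ℝ) (fun _ => 2 * Real.pi),
      pd (fun y => W k y * Φ y) k x = 0 := fun k =>
    integral_pd_zero _ ((hW k).mul hΦ) ((hWper k).mul hΦper) k
  have hint1 : IntegrableOn (fun x => ∑ k, pd (fun y => W k y * Φ y) k x)
      (Icc (0 : Fin (m+1) → ℝ) (fun _ => 2 * Real.pi)) :=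
    intB_integrable (by
      exact continuous_finset_sum _ fun k _ => (contDiff_pd ((hW k).mul hΦ) k).continuous)
  have hint2 : IntegrableOn (fun x => Φ x * ∑ k, pd (W k) k x)
      (Icc (0 : Fin (m+1) → ℝ) (fun _ => 2 * Real.pi)) :=
    intB_integrable (hΦ.continuous.mul
      (continuous_finset_sum _ fun k _ => (contDiff_pd (hW k) k).continuous))
  rw [integral_sub hint1 hint2, integral_finset_sum _
      (fun k _ => intB_integrable (contDiff_pd ((hW k).mul hΦ) k).continuous)]
  have : ∀ x, Φ x * ∑ k, pd (W k) k x = 0 := fun x => by rw [hWdiv x, mul_zero]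
  rw [setIntegral_congr_fun measurableSet_Icc (fun x _ => this x)]
  simp [h1]

/-- Integration by parts: ∫ ∇f·∇g = -∫ f Δg. -/
lemma integral_ibp (f g : (Fin (m+1) → ℝ) → ℝ) (hf : ContDiff ℝ (⊤ : ℕ∞) f)
    (hg : ContDiff ℝ (⊤ : ℕ∞) g) (hfper : Per f) (hgper : Per g) :
    ∫ x in Icc (0 : Fin (m+1) → ℝ) (fun _ => 2 * Real.pi), (∑ k, pd f k x * pd g k x)
      = -∫ x in Icc (0 : Fin (m+1) → ℝ) (fun _ => 2 * Real.pi),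
          f x * ∑ k, pd (pd g k) k x := by
  have key : ∀ x, (∑ k, pd f k x * pd g k x)
      = (∑ k, pd (fun y => f y * pd g k y) k x) - f x * ∑ k, pd (pd g k) k x := by
    intro x
    rw [Finset.mul_sum, ← Finset.sum_sub_distrib]
    apply Finset.sum_congr rfl
    intro k _
    rw [pd_mul (hf.differentiable (by simp) x) ((contDiff_pd hg k).differentiable (by simp) x)]
    ring
  rw [setIntegral_congr_fun measurableSet_Icc (fun x _ => key x)]
  have h1 : ∀ k : Fin (m+1), ∫ x in Icc (0 : Fin (m+1) → ℝ) (fun _ => 2 * Real.pi),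
      pd (fun y => f y * pd g k y) k x = 0 := fun k =>
    integral_pd_zero _ (hf.mul (contDiff_pd hg k))
      (hfper.mul (Per.pd (hg.differentiable (by simp)) hgper k)) k
  have hint1 : IntegrableOn (fun x => ∑ k, pd (fun y => f y * pd g k y) k x)
      (Icc (0 : Fin (m+1) → ℝ) (fun _ => 2 * Real.pi)) :=
    intB_integrable (continuous_finset_sum _ fun k _ =>
      (contDiff_pd (hf.mul (contDiff_pd hg k)) k).continuous)
  have hint2 : IntegrableOn (fun x => f x * ∑ k, pd (pd g k) k x)
      (Icc (0 : Fin (m+1) → ℝ) (fun _ => 2 * Real.pi)) :=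
    intB_integrable (hf.continuous.mul
      (continuous_finset_sum _ fun k _ => (contDiff_pd (contDiff_pd hg k) k).continuous))
  rw [integral_sub hint1 hint2, integral_finset_sum _
      (fun k _ => intB_integrable (contDiff_pd (hf.mul (contDiff_pd hg k)) k).continuous)]
  simp [h1]
end ibp

section alg
variable {N : Type*} [Fintype N]

lemma sum_alg (Fq V Pp : N → ℝ) (A C S Bb : N → N → ℝ) (α : ℝ) :
    (∑ j, 2 * Fq j * (-(∑ k, Fq k * C j k) - (∑ i, V i * A i j) - Pp j + α ^ 2 * ∑ k, S j k))
        + α ^ 2 * ∑ j, ∑ k, 2 * A j k * Bb j k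
      = (-2) * (∑ k, Fq k * ∑ j, (Fq j * C j k + V j * A j k))
        + ((-2) * (∑ k, Fq k * Pp k)
        + (2 * α ^ 2) * ∑ j, ((∑ k, A j k * Bb j k) + Fq j * ∑ k, S j k)) := by
  have l1 : ∀ j, 2 * Fq j * (-(∑ k, Fq k * C j k) - (∑ i, V i * A i j) - Pp j
        + α ^ 2 * ∑ k, S j k)
      = -2 * (∑ k, Fq j * (Fq k * C j k)) - 2 * (∑ i, Fq j * (V i * A i j))
        - 2 * (Fq j * Pp j) + 2 * α ^ 2 * (∑ k, Fq j * S j k) := by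
    intro j
    simp only [← Finset.mul_sum]
    ring
  rw [Finset.sum_congr rfl fun j _ => l1 j]
  have l2 : ∀ j, (∑ k, 2 * A j k * Bb j k) = 2 * ∑ k, A j k * Bb j k := by
    intro j
    rw [Finset.mul_sum]
    exact Finset.sum_congr rfl fun k _ => by ring
  rw [Finset.sum_congr rfl fun j (_ : j ∈ Finset.univ) => l2 j]
  have r1 : ∀ k, Fq k * ∑ j, (Fq j * C j k + V j * A j k)
      = (∑ j, Fq k * (Fq j * C j k)) + ∑ j, Fq k * (V j * A j k) := by
    intro k
    rw [Finset.mul_sum]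
    simp only [mul_add]
    rw [Finset.sum_add_distrib]
  rw [Finset.sum_congr rfl fun k (_ : k ∈ Finset.univ) => r1 k]
  have r2 : ∀ j, (∑ k, A j k * Bb j k) + Fq j * ∑ k, S j k
      = (∑ k, A j k * Bb j k) + ∑ k, Fq j * S j k := by
    intro j; rw [Finset.mul_sum]
  rw [Finset.sum_congr rfl fun j (_ : j ∈ Finset.univ) => r2 j]
  have hs1 : (∑ i, Fq i * ∑ k, Fq k * C i k) = ∑ x, Fq x * ∑ i, Fq i * C i x := by
    simp only [Finset.mul_sum]
    rw [Finset.sum_comm]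
    exact Finset.sum_congr rfl fun k _ => Finset.sum_congr rfl fun j _ => by ring
  simp only [Finset.sum_add_distrib, Finset.sum_sub_distrib, ← Finset.mul_sum]
  rw [hs1]
  ring
end alg

section key
open MeasureTheory Set

theorem key {m : ℕ} (α T : ℝ)
    (F : Fin (m+1) → ℝ × (Fin (m+1) → ℝ) → ℝ) (P : ℝ × (Fin (m+1) → ℝ) → ℝ)
    (V : Fin (m+1) → ℝ × (Fin (m+1) → ℝ) → ℝ)
    (hFs : ∀ ℓ, ContDiff ℝ (⊤ : ℕ∞) (F ℓ)) (hPs : ContDiff ℝ (⊤ : ℕ∞) P)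
    (hFper : ∀ ℓ, XPer (F ℓ)) (hPper : XPer P)
    (hdiv : ∀ t x, (∑ k, Dp (F k) k (t, x)) = 0)
    (hV : ∀ ℓ, V ℓ = fun q => F ℓ q - α ^ 2 * ∑ j, Dp (Dp (F ℓ) j) j q)
    (heqV : ∀ t ∈ Icc (0:ℝ) T, ∀ x ℓ,
      Dt (V ℓ) (t, x) + (∑ k, F k (t, x) * Dp (V ℓ) k (t, x))
        + (∑ j, V j (t, x) * Dp (F j) ℓ (t, x)) + Dp P ℓ (t, x) = 0) :
    ∀ t₁ ∈ Icc (0:ℝ) T, ∀ t₂ ∈ Icc (0:ℝ) T,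
      (∫ x in Icc (0 : Fin (m+1) → ℝ) fun _ => 2 * Real.pi,
        ((∑ i, (F i (t₁, x)) ^ 2) + α ^ 2 * ∑ j, ∑ k, (Dp (F j) k (t₁, x)) ^ 2))
      = ∫ x in Icc (0 : Fin (m+1) → ℝ) fun _ => 2 * Real.pi,
        ((∑ i, (F i (t₂, x)) ^ 2) + α ^ 2 * ∑ j, ∑ k, (Dp (F j) k (t₂, x)) ^ 2) := by
  -- differentiability / smoothness bookkeeping
  have hFd : ∀ ℓ, Differentiable ℝ (F ℓ) := fun ℓ => (hFs ℓ).differentiable (by simp)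
  have hAs : ∀ j k, ContDiff ℝ (⊤ : ℕ∞) (Dp (F j) k) := fun j k =>
    contDiff_fderiv_apply (hFs j) _
  have hAd : ∀ j k, Differentiable ℝ (Dp (F j) k) := fun j k =>
    (hAs j k).differentiable (by simp)
  have hDtFs : ∀ j, ContDiff ℝ (⊤ : ℕ∞) (Dt (F j)) := fun j =>
    contDiff_fderiv_apply (hFs j) _
  have hDtFd : ∀ j, Differentiable ℝ (Dt (F j)) := fun j =>
    (hDtFs j).differentiable (by simp)
  have hBs : ∀ j k, ContDiff ℝ (⊤ : ℕ∞) (Dp (Dt (F j)) k) := fun j k =>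
    contDiff_fderiv_apply (hDtFs j) _
  have hDDs : ∀ ℓ k, ContDiff ℝ (⊤ : ℕ∞) (Dp (Dp (F ℓ) k) k) := fun ℓ k =>
    contDiff_fderiv_apply (hAs ℓ k) _
  have hDDd : ∀ ℓ k, Differentiable ℝ (Dp (Dp (F ℓ) k) k) := fun ℓ k =>
    (hDDs ℓ k).differentiable (by simp)
  have hVs : ∀ ℓ, ContDiff ℝ (⊤ : ℕ∞) (V ℓ) := fun ℓ => by
    rw [hV ℓ]
    exact (hFs ℓ).sub (contDiff_const.mul (ContDiff.sum fun j _ => hDDs ℓ j))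
  have hVd : ∀ ℓ, Differentiable ℝ (V ℓ) := fun ℓ => (hVs ℓ).differentiable (by simp)
  have hDpVs : ∀ ℓ k, ContDiff ℝ (⊤ : ℕ∞) (Dp (V ℓ) k) := fun ℓ k =>
    contDiff_fderiv_apply (hVs ℓ) _
  have hPd : Differentiable ℝ P := hPs.differentiable (by simp)
  have hDpPs : ∀ k, ContDiff ℝ (⊤ : ℕ∞) (Dp P k) := fun k => contDiff_fderiv_apply hPs _
  -- periodicity bookkeeping
  have hAper : ∀ j k, XPer (Dp (F j) k) := fun j k => (hFper j).Dp (hFd j) k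
  have hVper : ∀ ℓ, XPer (V ℓ) := fun ℓ => by
    rw [hV ℓ]; intro t x z
    simp only []
    rw [hFper ℓ t x z]
    have : (∑ j, Dp (Dp (F ℓ) j) j (t, x + fun i => 2 * Real.pi * (z i : ℝ)))
        = ∑ j, Dp (Dp (F ℓ) j) j (t, x) :=
      Finset.sum_congr rfl fun j _ => ((hAper ℓ j).Dp (hAd ℓ j) j) t x z
    rw [this]
  set Bx : Set (Fin (m+1) → ℝ) := Icc (0 : Fin (m+1) → ℝ) (fun _ => 2 * Real.pi) with hBx
  set GI : ℝ × (Fin (m+1) → ℝ) → ℝ :=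
    fun q => (∑ i, F i q ^ 2) + α ^ 2 * ∑ j, ∑ k, Dp (F j) k q ^ 2 with hGI
  set Φ : ℝ × (Fin (m+1) → ℝ) → ℝ := fun q => ∑ j, F j q * V j q with hΦ
  have hGIs : ContDiff ℝ (⊤ : ℕ∞) GI := by
    rw [hGI]
    exact (ContDiff.sum fun i _ => (hFs i).pow 2).add
      (contDiff_const.mul (ContDiff.sum fun j _ => ContDiff.sum fun k _ => (hAs j k).pow 2))
  have hΦs : ContDiff ℝ (⊤ : ℕ∞) Φ := by
    rw [hΦ]; exact ContDiff.sum fun j _ => (hFs j).mul (hVs j)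
  have hΦd : Differentiable ℝ Φ := hΦs.differentiable (by simp)
  have hΦper : XPer Φ := by
    rw [hΦ]; intro t x z
    exact Finset.sum_congr rfl fun j _ => by rw [hFper j t x z, hVper j t x z]
  -- pointwise derivative identities
  have hA : ∀ q, Dt GI q = (∑ j, 2 * F j q * Dt (F j) q)
      + α ^ 2 * ∑ j, ∑ k, 2 * Dp (F j) k q * Dt (Dp (F j) k) q := by
    intro q
    show fderiv ℝ GI q (1, 0) = _
    rw [hGI]
    rw [fdapp_add (f := fun y => ∑ i, F i y ^ 2)
      (g := fun y => α ^ 2 * ∑ j, ∑ k, Dp (F j) k y ^ 2) _ _ (DifferentiableAt.fun_sum fun i _ => ((hFd i) q).pow 2)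
      ((differentiableAt_const _).mul (DifferentiableAt.fun_sum fun j _ =>
        DifferentiableAt.fun_sum fun k _ => ((hAd j k) q).pow 2))]
    rw [fdapp_sum (f := fun i y => F i y ^ 2) _ _ _ (fun i _ => ((hFd i) q).pow 2)]
    rw [fdapp_const_mul (f := fun y => ∑ j, ∑ k, Dp (F j) k y ^ 2) _ _ (DifferentiableAt.fun_sum fun j _ =>
      DifferentiableAt.fun_sum fun k _ => ((hAd j k) q).pow 2)]
    rw [fdapp_sum (f := fun j y => ∑ k, Dp (F j) k y ^ 2) _ _ _ (fun j _ => DifferentiableAt.fun_sum fun k _ => ((hAd j k) q).pow 2)]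
    rw [Finset.sum_congr rfl fun i (_ : i ∈ Finset.univ) => fdapp_sq _ q ((hFd i) q)]
    rw [Finset.sum_congr rfl fun j (_ : j ∈ Finset.univ) =>
      fdapp_sum (f := fun k y => Dp (F j) k y ^ 2) ((1:ℝ), (0 : Fin (m+1) → ℝ)) q _ (fun k _ => ((hAd j k) q).pow 2)]
    rw [Finset.sum_congr rfl fun j (_ : j ∈ Finset.univ) =>
      Finset.sum_congr rfl fun k (_ : k ∈ Finset.univ) => fdapp_sq _ q ((hAd j k) q)]
    rfl
  have hsymm1 : ∀ j k, Dt (Dp (F j) k) = Dp (Dt (F j)) k := fun j k =>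
    (Dp_Dt_comm (hFs j) k).symm
  have hsymm2 : ∀ j k, Dp (Dp (Dt (F j)) k) k = Dt (Dp (Dp (F j) k) k) := fun j k => by
    rw [Dp_Dt_comm (hFs j) k, Dp_Dt_comm (hAs j k) k]
  have hDtV : ∀ ℓ q, Dt (V ℓ) q = Dt (F ℓ) q - α ^ 2 * ∑ k, Dt (Dp (Dp (F ℓ) k) k) q := by
    intro ℓ q
    rw [hV ℓ]
    show fderiv ℝ (fun q => F ℓ q - α ^ 2 * ∑ j, Dp (Dp (F ℓ) j) j q) q (1, 0) = _
    rw [fdapp_sub (g := fun y => α ^ 2 * ∑ j, Dp (Dp (F ℓ) j) j y) _ _ ((hFd ℓ) q) ((differentiableAt_const _).mul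
      (DifferentiableAt.fun_sum fun j _ => (hDDd ℓ j) q))]
    rw [fdapp_const_mul _ _ (DifferentiableAt.fun_sum fun j _ => (hDDd ℓ j) q)]
    rw [fdapp_sum _ _ _ (fun j _ => (hDDd ℓ j) q)]
    rfl
  have hΦexp : ∀ k q, Dp Φ k q = ∑ j, (F j q * Dp (V j) k q + V j q * Dp (F j) k q) := by
    intro k q
    show fderiv ℝ Φ q (0, Pi.single k 1) = _
    rw [hΦ]
    rw [fdapp_sum (f := fun j y => F j y * V j y) _ _ _ (fun j _ => ((hFd j) q).mul ((hVd j) q))]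
    exact Finset.sum_congr rfl fun j _ => by
      rw [fdapp_mul _ _ ((hFd j) q) ((hVd j) q)]
      rfl
  -- derivative of the Hamiltonian
  have hHam : ∀ t : ℝ, HasDerivAt (fun s => ∫ x in Bx, GI (s, x))
      (∫ x in Bx, Dt GI (t, x)) t := fun t => hasDerivAt_integral_box GI hGIs t
  -- the derivative vanishes on [0, T]
  have hzero : ∀ t ∈ Icc (0:ℝ) T, (∫ x in Bx, Dt GI (t, x)) = 0 := by
    intro t ht
    have heq' : ∀ x ℓ, Dt (V ℓ) (t, x) = -(∑ k, F k (t, x) * Dp (V ℓ) k (t, x))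
        - (∑ j, V j (t, x) * Dp (F j) ℓ (t, x)) - Dp P ℓ (t, x) := by
      intro x ℓ; have := heqV t ht x ℓ; linarith
    have hDtF : ∀ j x, Dt (F j) (t, x) = -(∑ k, F k (t, x) * Dp (V j) k (t, x))
        - (∑ i, V i (t, x) * Dp (F i) j (t, x)) - Dp P j (t, x)
        + α ^ 2 * ∑ k, Dt (Dp (Dp (F j) k) k) (t, x) := by
      intro j x; have h1 := hDtV j (t, x); have h2 := heq' x j; linarith
    have hmaster : ∀ x, Dt GI (t, x)
        = (-2) * (∑ k, F k (t, x) * Dp Φ k (t, x))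
          + ((-2) * (∑ k, F k (t, x) * Dp P k (t, x))
          + (2 * α ^ 2) * ∑ j, ((∑ k, Dp (F j) k (t, x) * Dp (Dt (F j)) k (t, x))
              + F j (t, x) * ∑ k, Dp (Dp (Dt (F j)) k) k (t, x))) := by
      intro x
      rw [hA (t, x)]
      simp only [hsymm1, hsymm2, hΦexp, hDtF]
      exact sum_alg (fun j => F j (t, x)) (fun j => V j (t, x)) (fun j => Dp P j (t, x))
        (fun j k => Dp (F j) k (t, x)) (fun j k => Dp (V j) k (t, x))
        (fun j k => Dt (Dp (Dp (F j) k) k) (t, x)) (fun j k => Dp (Dt (F j)) k (t, x)) α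
    rw [setIntegral_congr_fun measurableSet_Icc (fun x _ => hmaster x)]
    have contS : ∀ (G : ℝ × (Fin (m+1) → ℝ) → ℝ), Continuous G →
        Continuous fun x : Fin (m+1) → ℝ => G (t, x) :=
      fun G hG => hG.comp (Continuous.prodMk_right t)
    have c1 : Continuous fun x : Fin (m+1) → ℝ => ∑ k, F k (t, x) * Dp Φ k (t, x) :=
      continuous_finset_sum _ fun k _ =>
        (contS _ (hFs k).continuous).mul (contS _ (contDiff_fderiv_apply hΦs _).continuous)
    have c2 : Continuous fun x : Fin (m+1) → ℝ => ∑ k, F k (t, x) * Dp P k (t, x) :=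
      continuous_finset_sum _ fun k _ =>
        (contS _ (hFs k).continuous).mul (contS _ (hDpPs k).continuous)
    have c3 : ∀ j, Continuous fun x : Fin (m+1) → ℝ =>
        (∑ k, Dp (F j) k (t, x) * Dp (Dt (F j)) k (t, x))
          + F j (t, x) * ∑ k, Dp (Dp (Dt (F j)) k) k (t, x) := fun j =>
      (continuous_finset_sum _ fun k _ =>
        (contS _ (hAs j k).continuous).mul (contS _ (hBs j k).continuous)).add
      ((contS _ (hFs j).continuous).mul (continuous_finset_sum _ fun k _ =>
        contS _ (contDiff_fderiv_apply (hBs j k) _).continuous))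
    have c4 : Continuous fun x : Fin (m+1) → ℝ =>
        ∑ j, ((∑ k, Dp (F j) k (t, x) * Dp (Dt (F j)) k (t, x))
          + F j (t, x) * ∑ k, Dp (Dp (Dt (F j)) k) k (t, x)) :=
      continuous_finset_sum _ fun j _ => c3 j
    have I1 : IntegrableOn (fun x => (-2 : ℝ) * (∑ k, F k (t, x) * Dp Φ k (t, x))) Bx :=
      intB_integrable (continuous_const.mul c1)
    have I2 : IntegrableOn (fun x => (-2 : ℝ) * (∑ k, F k (t, x) * Dp P k (t, x))) Bx :=
      intB_integrable (continuous_const.mul c2)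
    have I3 : IntegrableOn (fun x => (2 * α ^ 2)
        * ∑ j, ((∑ k, Dp (F j) k (t, x) * Dp (Dt (F j)) k (t, x))
          + F j (t, x) * ∑ k, Dp (Dp (Dt (F j)) k) k (t, x))) Bx :=
      intB_integrable (continuous_const.mul c4)
    have I23 : IntegrableOn (fun x => (-2 : ℝ) * (∑ k, F k (t, x) * Dp P k (t, x))
        + (2 * α ^ 2) * ∑ j, ((∑ k, Dp (F j) k (t, x) * Dp (Dt (F j)) k (t, x))
          + F j (t, x) * ∑ k, Dp (Dp (Dt (F j)) k) k (t, x))) Bx :=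
      intB_integrable ((continuous_const.mul c2).add (continuous_const.mul c4))
    rw [integral_add I1 I23]
    rw [integral_add I2 I3]
    rw [MeasureTheory.integral_const_mul, MeasureTheory.integral_const_mul, MeasureTheory.integral_const_mul]
    -- first piece: divergence-free against ∇Φ
    have Z1 : (∫ x in Bx, ∑ k, F k (t, x) * Dp Φ k (t, x)) = 0 := by
      have e : ∀ x ∈ Bx, (∑ k, F k (t, x) * Dp Φ k (t, x))
          = ∑ k, (fun y => F k (t, y)) x * pd (fun y => Φ (t, y)) k x := fun x _ =>
        Finset.sum_congr rfl fun k _ => by rw [pd_slice hΦd t k]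
      rw [setIntegral_congr_fun measurableSet_Icc e]
      exact integral_divfree _ (fun k => (hFs k).slice t) (fun k => (hFper k).slice t)
        (fun x => by
          have : ∀ k : Fin (m+1), pd (fun y => F k (t, y)) k x = Dp (F k) k (t, x) :=
            fun k => by rw [pd_slice (hFd k) t k]
          rw [Finset.sum_congr rfl fun k _ => this k]
          exact hdiv t x)
        _ (hΦs.slice t) (hΦper.slice t)
    -- second piece: divergence-free against ∇P
    have Z2 : (∫ x in Bx, ∑ k, F k (t, x) * Dp P k (t, x)) = 0 := by
      have e : ∀ x ∈ Bx, (∑ k, F k (t, x) * Dp P k (t, x))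
          = ∑ k, (fun y => F k (t, y)) x * pd (fun y => P (t, y)) k x := fun x _ =>
        Finset.sum_congr rfl fun k _ => by rw [pd_slice hPd t k]
      rw [setIntegral_congr_fun measurableSet_Icc e]
      exact integral_divfree _ (fun k => (hFs k).slice t) (fun k => (hFper k).slice t)
        (fun x => by
          have : ∀ k : Fin (m+1), pd (fun y => F k (t, y)) k x = Dp (F k) k (t, x) :=
            fun k => by rw [pd_slice (hFd k) t k]
          rw [Finset.sum_congr rfl fun k _ => this k]
          exact hdiv t x)
        _ (hPs.slice t) (hPper.slice t)
    -- third piece: integration by parts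
    have Z3 : ∀ j, (∫ x in Bx, ((∑ k, Dp (F j) k (t, x) * Dp (Dt (F j)) k (t, x))
        + F j (t, x) * ∑ k, Dp (Dp (Dt (F j)) k) k (t, x))) = 0 := by
      intro j
      have i1 : IntegrableOn
          (fun x => ∑ k, Dp (F j) k (t, x) * Dp (Dt (F j)) k (t, x)) Bx :=
        intB_integrable (continuous_finset_sum _ fun k _ =>
          (contS _ (hAs j k).continuous).mul (contS _ (hBs j k).continuous))
      have i2 : IntegrableOn
          (fun x => F j (t, x) * ∑ k, Dp (Dp (Dt (F j)) k) k (t, x)) Bx :=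
        intB_integrable ((contS _ (hFs j).continuous).mul
          (continuous_finset_sum _ fun k _ =>
            contS _ (contDiff_fderiv_apply (hBs j k) _).continuous))
      rw [integral_add i1 i2]
      have h1 : (∫ x in Bx, ∑ k, Dp (F j) k (t, x) * Dp (Dt (F j)) k (t, x))
          = ∫ x in Bx, ∑ k, pd (fun y => F j (t, y)) k x * pd (fun y => Dt (F j) (t, y)) k x :=
        setIntegral_congr_fun measurableSet_Icc (fun x _ =>
          Finset.sum_congr rfl fun k _ => by
            rw [pd_slice (hFd j) t k, pd_slice (hDtFd j) t k])
      have h2 : (∫ x in Bx, F j (t, x) * ∑ k, Dp (Dp (Dt (F j)) k) k (t, x))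
          = ∫ x in Bx, (fun y => F j (t, y)) x
              * ∑ k, pd (pd (fun y => Dt (F j) (t, y)) k) k x :=
        setIntegral_congr_fun measurableSet_Icc (fun x _ => by
          have : ∀ k : Fin (m+1), pd (pd (fun y => Dt (F j) (t, y)) k) k x
              = Dp (Dp (Dt (F j)) k) k (t, x) := by
            intro k
            rw [pd_slice (hDtFd j) t k, pd_slice ((hBs j k).differentiable (by simp)) t k]
          rw [Finset.sum_congr rfl fun k _ => this k])
      rw [h1, h2, integral_ibp (fun y => F j (t, y)) (fun y => Dt (F j) (t, y))
        ((hFs j).slice t) ((hDtFs j).slice t) ((hFper j).slice t)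
        (((hFper j).Dt (hFd j)).slice t)]
      ring
    rw [Z1, Z2]
    rw [integral_finset_sum _ (fun j _ => intB_integrable (c3 j))]
    rw [Finset.sum_congr rfl fun j (_ : j ∈ Finset.univ) => Z3 j]
    simp
  -- conclude by constancy
  intro t₁ ht₁ t₂ ht₂
  have hcont : ContinuousOn (fun s => ∫ x in Bx, GI (s, x)) (Icc (0:ℝ) T) :=
    fun s _ => (hHam s).continuousAt.continuousWithinAt
  have hc : ∀ s ∈ Icc (0:ℝ) T,
      (fun s => ∫ x in Bx, GI (s, x)) s = (fun s => ∫ x in Bx, GI (s, x)) 0 := by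
    apply constant_of_has_deriv_right_zero hcont
    intro s hs
    have h0 : (∫ x in Bx, Dt GI (s, x)) = 0 := hzero s ⟨hs.1, hs.2.le⟩
    have hd := (hHam s).hasDerivWithinAt (s := Ici s)
    rw [h0] at hd
    exact hd
  show (fun s => ∫ x in Bx, GI (s, x)) t₁ = (fun s => ∫ x in Bx, GI (s, x)) t₂
  rw [hc t₁ ht₁, hc t₂ ht₂]
end key

/-- **Conservation of the Hamiltonian for smooth solutions of Euler-α.**  If `(u, p)` is a
smooth space-periodic solution of `∂_t v + (u·∇)v + v^j ∇u^j + ∇p = 0`, `div u = 0`, where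
`v = u − α²Δu`, on `𝕋ⁿ × [0,T]` (`n = 2, 3`), then
`H_α(t) = ∫ (|u|² + α²|∇u|²) dx` is constant on `[0,T]`. -/
theorem statement14 (n : ℕ) (hn : n = 2 ∨ n = 3) (α T : ℝ) (hα : 0 < α) (hT : 0 < T)
    (u : ℝ → (Fin n → ℝ) → Fin n → ℝ) (p : ℝ → (Fin n → ℝ) → ℝ)
    (hu : ContDiff ℝ (⊤ : ℕ∞) fun q : ℝ × (Fin n → ℝ) => u q.1 q.2)
    (hp : ContDiff ℝ (⊤ : ℕ∞) fun q : ℝ × (Fin n → ℝ) => p q.1 q.2)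
    (huper : ∀ t (x : Fin n → ℝ) (z : Fin n → ℤ),
      u t (x + fun i => 2 * Real.pi * (z i : ℝ)) = u t x)
    (hpper : ∀ t (x : Fin n → ℝ) (z : Fin n → ℤ),
      p t (x + fun i => 2 * Real.pi * (z i : ℝ)) = p t x)
    (hdiv : ∀ t x, (∑ k, pd (fun y => u t y k) k x) = 0)
    (v : ℝ → (Fin n → ℝ) → Fin n → ℝ)
    (hv : ∀ t x ℓ, v t x ℓ = u t x ℓ - α ^ 2 * ∑ m, pd (pd (fun y => u t y ℓ) m) m x)
    (heq : ∀ t ∈ Set.Icc (0 : ℝ) T, ∀ x ℓ,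
      deriv (fun s => v s x ℓ) t
        + (∑ k, u t x k * pd (fun y => v t y ℓ) k x)
        + (∑ j, v t x j * pd (fun y => u t y j) ℓ x)
        + pd (fun y => p t y) ℓ x = 0) :
    ∀ t₁ ∈ Set.Icc (0 : ℝ) T, ∀ t₂ ∈ Set.Icc (0 : ℝ) T,
      (∫ x in Set.Icc (0 : Fin n → ℝ) fun _ => 2 * Real.pi,
          ((∑ i, (u t₁ x i) ^ 2)
            + α ^ 2 * ∑ j, ∑ m, (pd (fun y => u t₁ y j) m x) ^ 2))
        = ∫ x in Set.Icc (0 : Fin n → ℝ) fun _ => 2 * Real.pi,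
          ((∑ i, (u t₂ x i) ^ 2)
            + α ^ 2 * ∑ j, ∑ m, (pd (fun y => u t₂ y j) m x) ^ 2) := by

  obtain ⟨m, rfl⟩ : ∃ m, n = m + 1 := by rcases hn with h | h <;> exact ⟨n - 1, by omega⟩
  intro t₁ ht₁ t₂ ht₂
  set F : Fin (m+1) → ℝ × (Fin (m+1) → ℝ) → ℝ := fun ℓ q => u q.1 q.2 ℓ with hF
  set P : ℝ × (Fin (m+1) → ℝ) → ℝ := fun q => p q.1 q.2 with hP
  have hFs : ∀ ℓ, ContDiff ℝ (⊤ : ℕ∞) (F ℓ) := fun ℓ => contDiff_pi.mp hu ℓ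
  have hFd : ∀ ℓ, Differentiable ℝ (F ℓ) := fun ℓ => (hFs ℓ).differentiable (by simp)
  have hPs : ContDiff ℝ (⊤ : ℕ∞) P := hp
  have hPd : Differentiable ℝ P := hPs.differentiable (by simp)
  have hAs : ∀ j k, ContDiff ℝ (⊤ : ℕ∞) (Dp (F j) k) := fun j k =>
    contDiff_fderiv_apply (hFs j) _
  have hAd : ∀ j k, Differentiable ℝ (Dp (F j) k) := fun j k =>
    (hAs j k).differentiable (by simp)
  have hDDs : ∀ ℓ k, ContDiff ℝ (⊤ : ℕ∞) (Dp (Dp (F ℓ) k) k) := fun ℓ k =>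
    contDiff_fderiv_apply (hAs ℓ k) _
  set W : Fin (m+1) → ℝ × (Fin (m+1) → ℝ) → ℝ :=
    fun ℓ q => F ℓ q - α ^ 2 * ∑ j, Dp (Dp (F ℓ) j) j q with hWdef
  have hWs : ∀ ℓ, ContDiff ℝ (⊤ : ℕ∞) (W ℓ) := fun ℓ =>
    (hFs ℓ).sub (contDiff_const.mul (ContDiff.sum fun j _ => hDDs ℓ j))
  have hWd : ∀ ℓ, Differentiable ℝ (W ℓ) := fun ℓ => (hWs ℓ).differentiable (by simp)
  have hFper : ∀ ℓ, XPer (F ℓ) := fun ℓ t x z => by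
    show u t (x + fun i => 2 * Real.pi * (z i : ℝ)) ℓ = u t x ℓ
    rw [huper t x z]
  have hPper : XPer P := fun t x z => hpper t x z
  -- pd/Dp bridge
  have epd : ∀ (t : ℝ) (j k : Fin (m+1)),
      pd (fun y => u t y j) k = fun x => Dp (F j) k (t, x) := fun t j k =>
    pd_slice (hFd j) t k
  have hdivD : ∀ (t : ℝ) x, (∑ k, Dp (F k) k (t, x)) = 0 := by
    intro t x
    have h := hdiv t x
    simp only [epd] at h
    exact h
  -- v agrees with W
  have hWV : ∀ t x ℓ, v t x ℓ = W ℓ (t, x) := by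
    intro t x ℓ
    rw [hv t x ℓ]
    show _ = F ℓ (t, x) - α ^ 2 * ∑ j, Dp (Dp (F ℓ) j) j (t, x)
    have e2 : ∀ j : Fin (m+1), pd (pd (fun y => u t y ℓ) j) j x
        = Dp (Dp (F ℓ) j) j (t, x) := by
      intro j
      rw [epd t ℓ j]
      exact congrFun (pd_slice (hAd ℓ j) t j) x
    rw [Finset.sum_congr rfl fun j (_ : j ∈ Finset.univ) => e2 j]
  -- translated Euler-α equation
  have heqV : ∀ t ∈ Set.Icc (0:ℝ) T, ∀ x ℓ,
      Dt (W ℓ) (t, x) + (∑ k, F k (t, x) * Dp (W ℓ) k (t, x))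
        + (∑ j, W j (t, x) * Dp (F j) ℓ (t, x)) + Dp P ℓ (t, x) = 0 := by
    intro t ht x ℓ
    have h := heq t ht x ℓ
    simp only [hWV] at h
    rw [deriv_slice (hWd ℓ) t x] at h
    have h3 : ∀ k : Fin (m+1), pd (fun y => W ℓ (t, y)) k = fun x => Dp (W ℓ) k (t, x) :=
      fun k => pd_slice (hWd ℓ) t k
    have h4 : ∀ j : Fin (m+1), pd (fun y => u t y j) ℓ = fun x => Dp (F j) ℓ (t, x) :=
      fun j => epd t j ℓ
    have h5 : pd (fun y => p t y) ℓ = fun x => Dp P ℓ (t, x) := pd_slice hPd t ℓ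
    simp only [h3, h4, h5] at h
    exact h
  have hkey := key α T F P W hFs hPs hFper hPper hdivD
    (fun ℓ => rfl) heqV t₁ ht₁ t₂ ht₂
  -- bridge the integrands
  have e : ∀ (t : ℝ) x, ((∑ i, (u t x i) ^ 2)
      + α ^ 2 * ∑ j, ∑ k, (pd (fun y => u t y j) k x) ^ 2)
      = ((∑ i, (F i (t, x)) ^ 2) + α ^ 2 * ∑ j, ∑ k, (Dp (F j) k (t, x)) ^ 2) := by
    intro t x
    simp only [epd]
    rfl
  calc (∫ x in Set.Icc (0 : Fin (m+1) → ℝ) fun _ => 2 * Real.pi,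
          ((∑ i, (u t₁ x i) ^ 2)
            + α ^ 2 * ∑ j, ∑ k, (pd (fun y => u t₁ y j) k x) ^ 2))
      = ∫ x in Set.Icc (0 : Fin (m+1) → ℝ) fun _ => 2 * Real.pi,
          ((∑ i, (F i (t₁, x)) ^ 2) + α ^ 2 * ∑ j, ∑ k, (Dp (F j) k (t₁, x)) ^ 2) :=
        MeasureTheory.setIntegral_congr_fun measurableSet_Icc (fun x _ => e t₁ x)
    _ = ∫ x in Set.Icc (0 : Fin (m+1) → ℝ) fun _ => 2 * Real.pi,
          ((∑ i, (F i (t₂, x)) ^ 2) + α ^ 2 * ∑ j, ∑ k, (Dp (F j) k (t₂, x)) ^ 2) := hkey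
    _ = _ := (MeasureTheory.setIntegral_congr_fun measurableSet_Icc (fun x _ => e t₂ x)).symm
end

section
/- Let B ⊂ ℝ³ be a closed ball of diameter D > 0, let f : B → ℝ be smooth, and let N ≥ 1 be an integer. Then for every x ∈ B: |f(x)| ≤ ∑_{m=0}^{N−1} D^m · |B|^{−1} · ‖D^m f‖_{L¹(B)} + D^N · sup_{y ∈ B} ‖D^N f(y)‖, where |B| denotes the Lebesgue measure of B. -/
open MeasureTheory

/-- **Iterated mean-value estimate on a ball.**  If `B ⊂ ℝ³` is a closed ball of diameter
`D > 0` and `f` is smooth on `B`, then for every `x ∈ B` and integer `N ≥ 1`,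
`|f(x)| ≤ ∑_{m<N} D^m |B|⁻¹ ‖D^m f‖_{L¹(B)} + D^N sup_{y∈B} ‖D^N f(y)‖`. -/
theorem statement19 (x₀ : EuclideanSpace ℝ (Fin 3)) (D : ℝ) (hD : 0 < D)
    (B : Set (EuclideanSpace ℝ (Fin 3))) (hB : B = Metric.closedBall x₀ (D / 2))
    (f : EuclideanSpace ℝ (Fin 3) → ℝ) (hf : ContDiffOn ℝ (⊤ : ℕ∞) f B)
    (N : ℕ) (hN : 1 ≤ N) :
    ∀ x ∈ B,
      |f x| ≤ (∑ m ∈ Finset.range N,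
          D ^ m * ((volume B).toReal)⁻¹ *
            ∫ y in B, ‖iteratedFDerivWithin ℝ m f B y‖)
        + D ^ N * sSup ((fun y => ‖iteratedFDerivWithin ℝ N f B y‖) '' B) := by
  have hr : 0 < D / 2 := by positivity
  have hx₀ : x₀ ∈ B := by rw [hB]; exact Metric.mem_closedBall_self hr.le
  have hBne : B.Nonempty := ⟨x₀, hx₀⟩
  have hconv : Convex ℝ B := by rw [hB]; exact convex_closedBall _ _
  have hcomp : IsCompact B := by rw [hB]; exact isCompact_closedBall _ _
  have hmeas : MeasurableSet B := hcomp.measurableSet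
  have hU : UniqueDiffOn ℝ B := by
    refine uniqueDiffOn_convex hconv ?_
    rw [hB, interior_closedBall _ hr.ne']
    exact ⟨x₀, Metric.mem_ball_self hr⟩
  have hvol : 0 < (volume B).toReal := by
    rw [hB]
    refine ENNReal.toReal_pos (Metric.measure_closedBall_pos volume _ hr).ne' ?_
    exact (IsCompact.measure_lt_top (isCompact_closedBall _ _)).ne
  -- distance bound
  have hdist : ∀ y ∈ B, ∀ z ∈ B, ‖y - z‖ ≤ D := by
    intro y hy z hz
    rw [hB, Metric.mem_closedBall] at hy hz
    have := dist_triangle y x₀ z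
    rw [← dist_eq_norm]
    calc dist y z ≤ dist y x₀ + dist x₀ z := dist_triangle y x₀ z
      _ ≤ D / 2 + D / 2 := add_le_add hy (by rwa [dist_comm])
      _ = D := by ring
  -- continuity of iterated derivatives
  have hcont : ∀ m : ℕ, ContinuousOn (fun y => ‖iteratedFDerivWithin ℝ m f B y‖) B := by
    intro m
    exact (hf.continuousOn_iteratedFDerivWithin (by exact_mod_cast le_top) hU).norm
  have hbdd : ∀ m : ℕ, BddAbove ((fun y => ‖iteratedFDerivWithin ℝ m f B y‖) '' B) :=
    fun m => (hcomp.image_of_continuousOn (hcont m)).bddAbove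
  have hle_sup : ∀ m : ℕ, ∀ y ∈ B, ‖iteratedFDerivWithin ℝ m f B y‖ ≤
      sSup ((fun y => ‖iteratedFDerivWithin ℝ m f B y‖) '' B) :=
    fun m y hy => le_csSup (hbdd m) ⟨y, hy, rfl⟩
  have hS0 : ∀ m : ℕ, 0 ≤ sSup ((fun y => ‖iteratedFDerivWithin ℝ m f B y‖) '' B) :=
    fun m => le_trans (norm_nonneg _) (hle_sup m x₀ hx₀)
  have hint : ∀ m : ℕ, IntegrableOn (fun y => ‖iteratedFDerivWithin ℝ m f B y‖) B volume :=
    fun m => (hcont m).integrableOn_compact hcomp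
  -- key mean-value step
  have key : ∀ (m : ℕ), ∀ y ∈ B, ‖iteratedFDerivWithin ℝ m f B y‖ ≤
      ((volume B).toReal)⁻¹ * (∫ z in B, ‖iteratedFDerivWithin ℝ m f B z‖) +
      D * sSup ((fun y => ‖iteratedFDerivWithin ℝ (m + 1) f B y‖) '' B) := by
    intro m y hy
    set S := sSup ((fun y => ‖iteratedFDerivWithin ℝ (m + 1) f B y‖) '' B) with hS
    have hdiff : DifferentiableOn ℝ (iteratedFDerivWithin ℝ m f B) B :=
      hf.differentiableOn_iteratedFDerivWithin (by exact_mod_cast lt_top_iff_ne_top.2 (by simp)) hU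
    have mvt : ∀ z ∈ B, ‖iteratedFDerivWithin ℝ m f B y‖ ≤
        ‖iteratedFDerivWithin ℝ m f B z‖ + D * S := by
      intro z hz
      have h1 : ‖iteratedFDerivWithin ℝ m f B y - iteratedFDerivWithin ℝ m f B z‖ ≤
          S * ‖y - z‖ := by
        refine hconv.norm_image_sub_le_of_norm_fderivWithin_le hdiff ?_ hz hy
        intro w hw
        rw [norm_fderivWithin_iteratedFDerivWithin]
        exact hle_sup (m + 1) w hw
      have h2 : ‖iteratedFDerivWithin ℝ m f B y‖ ≤
          ‖iteratedFDerivWithin ℝ m f B z‖ +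
            ‖iteratedFDerivWithin ℝ m f B y - iteratedFDerivWithin ℝ m f B z‖ :=
        norm_le_insert' _ _
      have h3 : S * ‖y - z‖ ≤ D * S := by
        rw [mul_comm D S]
        exact mul_le_mul_of_nonneg_left (hdist y hy z hz) (hS0 (m + 1))
      linarith
    have hIc : IntegrableOn (fun _ : EuclideanSpace ℝ (Fin 3) =>
        ‖iteratedFDerivWithin ℝ m f B y‖) B volume := integrableOn_const hcomp.measure_lt_top.ne
    have hIg : IntegrableOn (fun z => ‖iteratedFDerivWithin ℝ m f B z‖ + D * S) B volume :=
      (hint m).add (integrableOn_const hcomp.measure_lt_top.ne)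
    have hI : (volume B).toReal * ‖iteratedFDerivWithin ℝ m f B y‖ ≤
        (∫ z in B, ‖iteratedFDerivWithin ℝ m f B z‖) + (volume B).toReal * (D * S) := by
      have := setIntegral_mono_on hIc hIg hmeas mvt
      rw [setIntegral_const] at this
      rw [integral_add (hint m) (integrableOn_const hcomp.measure_lt_top.ne),
        setIntegral_const] at this
      simpa [smul_eq_mul, Measure.real] using this
    have := mul_le_mul_of_nonneg_left hI (inv_nonneg.2 hvol.le)
    calc ‖iteratedFDerivWithin ℝ m f B y‖
        = ((volume B).toReal)⁻¹ * ((volume B).toReal * ‖iteratedFDerivWithin ℝ m f B y‖) := by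
          field_simp
      _ ≤ ((volume B).toReal)⁻¹ *
          ((∫ z in B, ‖iteratedFDerivWithin ℝ m f B z‖) + (volume B).toReal * (D * S)) := this
      _ = ((volume B).toReal)⁻¹ * (∫ z in B, ‖iteratedFDerivWithin ℝ m f B z‖) + D * S := by
          field_simp
  -- main induction
  have main : ∀ n : ℕ, ∀ x ∈ B, |f x| ≤ (∑ m ∈ Finset.range n,
      D ^ m * ((volume B).toReal)⁻¹ * ∫ y in B, ‖iteratedFDerivWithin ℝ m f B y‖)
      + D ^ n * sSup ((fun y => ‖iteratedFDerivWithin ℝ n f B y‖) '' B) := by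
    intro n
    induction n with
    | zero =>
      intro x hx
      simp only [Finset.range_zero, Finset.sum_empty, pow_zero, one_mul, zero_add]
      have : |f x| = ‖iteratedFDerivWithin ℝ 0 f B x‖ := by
        rw [norm_iteratedFDerivWithin_zero, Real.norm_eq_abs]
      rw [this]
      exact hle_sup 0 x hx
    | succ n ih =>
      intro x hx
      have hsup : sSup ((fun y => ‖iteratedFDerivWithin ℝ n f B y‖) '' B) ≤
          ((volume B).toReal)⁻¹ * (∫ z in B, ‖iteratedFDerivWithin ℝ n f B z‖) +
          D * sSup ((fun y => ‖iteratedFDerivWithin ℝ (n + 1) f B y‖) '' B) := by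
        refine csSup_le (hBne.image _) ?_
        rintro _ ⟨y, hy, rfl⟩
        exact key n y hy
      have h1 := ih x hx
      have h2 : D ^ n * sSup ((fun y => ‖iteratedFDerivWithin ℝ n f B y‖) '' B) ≤
          D ^ n * (((volume B).toReal)⁻¹ * (∫ z in B, ‖iteratedFDerivWithin ℝ n f B z‖) +
          D * sSup ((fun y => ‖iteratedFDerivWithin ℝ (n + 1) f B y‖) '' B)) :=
        mul_le_mul_of_nonneg_left hsup (pow_nonneg hD.le n)
      rw [Finset.sum_range_succ]
      have expand : D ^ n * (((volume B).toReal)⁻¹ * (∫ z in B, ‖iteratedFDerivWithin ℝ n f B z‖) +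
          D * sSup ((fun y => ‖iteratedFDerivWithin ℝ (n + 1) f B y‖) '' B)) =
          D ^ n * ((volume B).toReal)⁻¹ * (∫ z in B, ‖iteratedFDerivWithin ℝ n f B z‖) +
          D ^ (n + 1) * sSup ((fun y => ‖iteratedFDerivWithin ℝ (n + 1) f B y‖) '' B) := by
        ring
      linarith
  exact main N
end
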